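/- arXiv:1312.4493 — 4 statements merged into one kernel-verified Lean document; each statement's English description precedes it below -/
import Mathlib

section
/- Let K be a field with non-archimedean absolute value and residue characteristic p ≥ 0, and let f ∈ K[z] be a polynomial of degree n ≥ 1. Let V ⊆ ℂ_v be a closed disk containing all the roots of f, and let e = v_p(n) ≥ 0. Then there is a point α ∈ V such that [K(α):K] ≤ p^e. -/
open Polynomial

noncomputable section

namespace PGR

open scoped Classical

variable {Ω : Type} [Field Ω]

/-- The ring of integers `{x : v x ≤ 1}` of a non-archimedean absolute value,
as a valuation subring. -/
def integers (v : AbsoluteValue Ω ℝ) (hv : IsNonarchimedean v) : ValuationSubring Ω where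
  carrier := {x | v x ≤ 1}
  one_mem' := le_of_eq v.map_one
  mul_mem' := fun {a b} ha hb => by
    simp only [Set.mem_setOf_eq, v.map_mul] at *
    exact mul_le_one₀ ha (v.nonneg b) hb
  zero_mem' := by simp only [Set.mem_setOf_eq, v.map_zero]; norm_num
  add_mem' := fun {a b} ha hb => le_trans (hv a b) (max_le ha hb)
  neg_mem' := fun {a} ha => by simpa only [Set.mem_setOf_eq, v.map_neg] using ha
  mem_or_inv_mem' := fun x => by
    by_cases h : v x ≤ 1
    · exact Or.inl h
    · right
      rcases eq_or_ne x 0 with rfl | hx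
      · simp only [Set.mem_setOf_eq, inv_zero, v.map_zero]; norm_num
      · have h1 : v x⁻¹ = (v x)⁻¹ := map_inv₀ v x
        have h2 : (1:ℝ) ≤ v x := le_of_not_ge h
        simp only [Set.mem_setOf_eq, h1]
        exact inv_le_one_of_one_le₀ h2

/-- The residue field of a non-archimedean absolute value. -/
def resField (v : AbsoluteValue Ω ℝ) (hv : IsNonarchimedean v) : Type :=
  IsLocalRing.ResidueField (integers v hv)

instance (v : AbsoluteValue Ω ℝ) (hv : IsNonarchimedean v) : Field (resField v hv) :=
  inferInstanceAs (Field (IsLocalRing.ResidueField (integers v hv)))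

/-- Reduction of an element of the ring of integers to the residue field;
junk value `0` for elements of absolute value `> 1`. -/
def redCoeff (v : AbsoluteValue Ω ℝ) (hv : IsNonarchimedean v) (x : Ω) : resField v hv :=
  if h : v x ≤ 1 then IsLocalRing.residue (integers v hv) ⟨x, h⟩ else 0

/-- Coefficientwise reduction of a polynomial to the residue field. -/
def polyReduce (v : AbsoluteValue Ω ℝ) (hv : IsNonarchimedean v) (f : Polynomial Ω) :
    Polynomial (resField v hv) :=
  ∑ n ∈ f.support, Polynomial.C (redCoeff v hv (f.coeff n)) * Polynomial.X ^ n

/-- The degree of a rational function: the maximum of the degrees of its numerator and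
denominator (in lowest terms). -/
def ratfuncDegree {F : Type} [Field F] (φ : RatFunc F) : ℕ :=
  max φ.num.natDegree φ.denom.natDegree

/-- `φ ∈ F(z)` has good reduction: writing `φ = f/g` in lowest terms with coefficients
in the ring of integers, at least one of absolute value 1, the coefficientwise reduction
`f̄/ḡ` has the same degree as `φ`. -/
def HasGoodReduction (v : AbsoluteValue Ω ℝ) (hv : IsNonarchimedean v) (φ : RatFunc Ω) : Prop :=
  ∃ f g : Polynomial Ω, IsCoprime f g ∧ g ≠ 0 ∧
    φ = algebraMap (Polynomial Ω) (RatFunc Ω) f / algebraMap (Polynomial Ω) (RatFunc Ω) g ∧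
    (∀ n, v (f.coeff n) ≤ 1) ∧ (∀ n, v (g.coeff n) ≤ 1) ∧
    ((∃ n, v (f.coeff n) = 1) ∨ (∃ n, v (g.coeff n) = 1)) ∧
    ratfuncDegree
      (algebraMap (Polynomial (resField v hv)) (RatFunc (resField v hv)) (polyReduce v hv f) /
        algebraMap (Polynomial (resField v hv)) (RatFunc (resField v hv)) (polyReduce v hv g))
      = ratfuncDegree φ

/-- `∑_{i=0}^{n} fᵢ P^i Q^{n-i}` : evaluation of the degree-`n` homogenization of `f`
at the pair of polynomials `(P, Q)`. -/
def homogEval {F : Type} [Field F] (n : ℕ) (f P Q : Polynomial F) : Polynomial F :=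
  ∑ i ∈ Finset.range (n + 1), Polynomial.C (f.coeff i) * P ^ i * Q ^ (n - i)

/-- The conjugate `h ∘ φ ∘ h⁻¹` of a rational function `φ` by the Möbius transformation
`h(z) = (az + b)/(cz + d)` (meaningful when `ad - bc ≠ 0`). -/
def moebiusConj {F : Type} [Field F] (a b c d : F) (φ : RatFunc F) : RatFunc F :=
  let D := ratfuncDegree φ
  let P : Polynomial F := Polynomial.C d * Polynomial.X - Polynomial.C b
  let Q : Polynomial F := -Polynomial.C c * Polynomial.X + Polynomial.C a
  let N := homogEval D φ.num P Q
  let M := homogEval D φ.denom P Q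
  algebraMap (Polynomial F) (RatFunc F) (Polynomial.C a * N + Polynomial.C b * M) /
    algebraMap (Polynomial F) (RatFunc F) (Polynomial.C c * N + Polynomial.C d * M)

/-- The image of a rational function over `K` in the rational functions over an
extension field. -/
def ratfuncMap {K F : Type} [Field K] [Field F] (σ : K →+* F) (φ : RatFunc K) : RatFunc F :=
  algebraMap (Polynomial F) (RatFunc F) (φ.num.map σ) /
    algebraMap (Polynomial F) (RatFunc F) (φ.denom.map σ)

/-- Evaluation of a rational function at a point of `P¹ = F ∪ {∞}`. -/
def evalP1 {F : Type} [Field F] (φ : RatFunc F) : OnePoint F → OnePoint F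
  | OnePoint.infty =>
      if φ.denom.natDegree < φ.num.natDegree then OnePoint.infty
      else if φ.num.natDegree < φ.denom.natDegree then ((0 : F) : OnePoint F)
      else ((φ.num.leadingCoeff / φ.denom.leadingCoeff : F) : OnePoint F)
  | (x : F) =>
      if φ.denom.eval x = 0 then OnePoint.infty
      else ((φ.num.eval x / φ.denom.eval x : F) : OnePoint F)

/-- The Möbius transformation `z ↦ (az+b)/(cz+d)` as a map on `P¹` (meaningful when
`ad - bc ≠ 0`). -/
def moebiusP1 {F : Type} [Field F] (a b c d : F) : OnePoint F → OnePoint F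
  | OnePoint.infty => if c = 0 then OnePoint.infty else ((a / c : F) : OnePoint F)
  | (x : F) =>
      if c * x + d = 0 then OnePoint.infty
      else (((a * x + b) / (c * x + d) : F) : OnePoint F)

/-- The open disk `D(b,r)`, viewed inside `P¹`. -/
def openDiskP1 (v : AbsoluteValue Ω ℝ) (b : Ω) (r : ℝ) : Set (OnePoint Ω) :=
  {x | ∃ y : Ω, x = (y : OnePoint Ω) ∧ v (y - b) < r}

/-- The complement of the closed disk `D̄(c,r)`, viewed inside `P¹` (it contains `∞`). -/
def outerComponent (v : AbsoluteValue Ω ℝ) (c : Ω) (r : ℝ) : Set (OnePoint Ω) :=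
  insert OnePoint.infty {x | ∃ y : Ω, x = (y : OnePoint Ω) ∧ r < v (y - c)}

/-- `U` is a connected component of the complement of the type II point `ζ(c,r)`:
either an open disk `D(b,r)` with `b ∈ D̄(c,r)`, or the complement of `D̄(c,r)`. -/
def IsComponentOf (v : AbsoluteValue Ω ℝ) (c : Ω) (r : ℝ) (U : Set (OnePoint Ω)) : Prop :=
  (∃ b : Ω, v (b - c) ≤ r ∧ U = openDiskP1 v b r) ∨ U = outerComponent v c r

/-- The type II point `ζ(c,r)` is totally invariant under `φ`: `r` lies in the value group,
and for every `β` with `|β| = r`, the conjugate `z ↦ β⁻¹(φ(c + βz) - c)` has good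
reduction. -/
def TotallyInvariant (v : AbsoluteValue Ω ℝ) (hv : IsNonarchimedean v) (φ : RatFunc Ω)
    (c : Ω) (r : ℝ) : Prop :=
  (∃ β : Ω, β ≠ 0 ∧ v β = r) ∧
    ∀ β : Ω, v β = r → HasGoodReduction v hv (moebiusConj 1 (-c) 0 β φ)

/-- The multiplicity of `x` as a preimage of `y` under `φ`, on `P¹`. -/
def multAt {F : Type} [Field F] (φ : RatFunc F) : OnePoint F → OnePoint F → ℕ
  | (x : F), (y : F) => (φ.num - Polynomial.C y * φ.denom).rootMultiplicity x
  | (x : F), OnePoint.infty => φ.denom.rootMultiplicity x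
  | OnePoint.infty, (y : F) =>
      ratfuncDegree φ - (φ.num - Polynomial.C y * φ.denom).natDegree
  | OnePoint.infty, OnePoint.infty => φ.num.natDegree - φ.denom.natDegree

/-- The multiplier of `φ` at a finite fixed point `x`: the value `φ'(x)`. -/
def multiplierFin {F : Type} [Field F] (φ : RatFunc F) (x : F) : F :=
  ((Polynomial.derivative φ.num).eval x * φ.denom.eval x -
      φ.num.eval x * (Polynomial.derivative φ.denom).eval x) / (φ.denom.eval x) ^ 2

/-- The multiplier of `φ` at a fixed point of `P¹`; at `∞` it is computed after
conjugating by `z ↦ 1/z`. -/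
def multiplier {F : Type} [Field F] (φ : RatFunc F) : OnePoint F → F
  | (x : F) => multiplierFin φ x
  | OnePoint.infty => multiplierFin (moebiusConj 0 1 1 0 φ) 0

/-- The standard (non-archimedean) chordal metric on `P¹`. -/
def chordal (v : AbsoluteValue Ω ℝ) : OnePoint Ω → OnePoint Ω → ℝ
  | (x : Ω), (y : Ω) => v (x - y) / (max 1 (v x) * max 1 (v y))
  | (x : Ω), OnePoint.infty => 1 / max 1 (v x)
  | OnePoint.infty, (y : Ω) => 1 / max 1 (v y)
  | OnePoint.infty, OnePoint.infty => 0

/-- The value group `|L^×| ⊆ ℝ^×` of a subfield `L` of `Ω`. -/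
def valueGroup (v : AbsoluteValue Ω ℝ) (L : Subfield Ω) : Subgroup ℝˣ where
  carrier := {r : ℝˣ | ∃ x : Ω, x ≠ 0 ∧ x ∈ L ∧ v x = (r : ℝ)}
  one_mem' := ⟨1, one_ne_zero, L.one_mem, by simp [v.map_one]⟩
  mul_mem' := by
    rintro r s ⟨x, hx0, hxL, hxv⟩ ⟨y, hy0, hyL, hyv⟩
    exact ⟨x * y, mul_ne_zero hx0 hy0, L.mul_mem hxL hyL, by simp [v.map_mul, hxv, hyv]⟩
  inv_mem' := by
    rintro r ⟨x, hx0, hxL, hxv⟩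
    exact ⟨x⁻¹, inv_ne_zero hx0, L.inv_mem hxL, by simp [map_inv₀ v, hxv]⟩


/-- The bound `B(p,d)` of Theorem A. -/
def Bbound (p d : ℕ) : ℕ :=
  if p.Prime ∧ 3 ≤ d ∧ p ∣ d then p ^ (d.factorization p) * (d - 1)
  else if p.Prime ∧ 3 ≤ d ∧ p ∣ (d - 1) then d * p ^ ((d - 1).factorization p)
  else d + 1

/-- There exists `h ∈ PGL(2, L)` such that `h ∘ φ ∘ h⁻¹` has good reduction,
for `φ` viewed over `Ω` and `L` a subfield of `Ω`. -/
def GoodReductionOver (v : AbsoluteValue Ω ℝ) (hv : IsNonarchimedean v) (L : Subfield Ω)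
    (φ : RatFunc Ω) : Prop :=
  ∃ a b c d : Ω, a ∈ L ∧ b ∈ L ∧ c ∈ L ∧ d ∈ L ∧ a * d - b * c ≠ 0 ∧
    HasGoodReduction v hv (moebiusConj a b c d φ)

/-- `φ ∈ K(z)` has potentially good reduction: it is conjugate over some finite
extension of `K` (inside the algebraically closed field `Ω`) to a map of good
reduction. -/
def PotentiallyGoodReduction (v : AbsoluteValue Ω ℝ) (hv : IsNonarchimedean v) (K : Type)
    [Field K] [Algebra K Ω] (φ : RatFunc K) : Prop :=
  ∃ L : IntermediateField K Ω, FiniteDimensional K L ∧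
    GoodReductionOver v hv L.toSubfield (ratfuncMap (algebraMap K Ω) φ)

/-- `x` is a point of `P¹(K) = K ∪ {∞}`, viewed inside `P¹(Ω)`. -/
def IsP1Pt (K : Type) {Ω : Type} [Field K] [Field Ω] [Algebra K Ω] (x : OnePoint Ω) : Prop :=
  x = OnePoint.infty ∨ ∃ a : K, x = ((algebraMap K Ω a : Ω) : OnePoint Ω)

/-- `x ∈ P¹(K̄)` with `[K(x):K] ≤ n` (convention: `K(∞) = K`). -/
def P1AlgDegLE (K : Type) {Ω : Type} [Field K] [Field Ω] [Algebra K Ω]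
    (x : OnePoint Ω) (n : ℕ) : Prop :=
  x = OnePoint.infty ∨
    ∃ a : Ω, x = (a : OnePoint Ω) ∧ IsAlgebraic K a ∧
      Module.finrank K (IntermediateField.adjoin K {a}) ≤ n

/-- The extension `K(α)/K` is totally ramified (of degree equal to its
ramification index). -/
def AdjoinTotallyRamified (v : AbsoluteValue Ω ℝ) (K : Type) [Field K] [Algebra K Ω]
    (α : Ω) : Prop :=
  Module.finrank K (IntermediateField.adjoin K ({α} : Set Ω)) =
    Subgroup.relIndex (valueGroup v (algebraMap K Ω).fieldRange)
      (valueGroup v (IntermediateField.adjoin K ({α} : Set Ω)).toSubfield)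

/-- The set `|K| = {|x| : x ∈ K} ⊆ ℝ` of absolute values of elements of `K`. -/
def absSet (v : AbsoluteValue Ω ℝ) (K : Type) [Field K] [Algebra K Ω] : Set ℝ :=
  {r : ℝ | ∃ x : K, v (algebraMap K Ω x) = r}


/-- The value group `|K^×| = {|x| : x ∈ K, x ≠ 0} ⊆ ℝ` of `K`, as a set. -/
def absSetNZ (v : AbsoluteValue Ω ℝ) (K : Type) [Field K] [Algebra K Ω] : Set ℝ :=
  {r : ℝ | ∃ x : K, x ≠ 0 ∧ v (algebraMap K Ω x) = r}

/-- `x ∈ P¹(K̄)` with `[K(x):K] ≤ n` and `K(x)/K` totally ramified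
(convention: `K(∞) = K`). -/
def P1AlgDegLERam (v : AbsoluteValue Ω ℝ) (K : Type) [Field K] [Algebra K Ω]
    (x : OnePoint Ω) (n : ℕ) : Prop :=
  x = OnePoint.infty ∨
    ∃ a : Ω, x = (a : OnePoint Ω) ∧ IsAlgebraic K a ∧
      Module.finrank K (IntermediateField.adjoin K ({a} : Set Ω)) ≤ n ∧
      AdjoinTotallyRamified v K a

/-! Let `q = p ^ v_p(n)`. By Lucas's theorem `(n choose q)` is prime to `p`, so it is a unit of
the valuation ring. After centring at `a`, Vieta's formulas and the ultrametric inequality turn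
"all roots lie in `D̄(0, s)`" into `|c_k| ≤ |c_n| s ^ (n - k)` for the coefficients `c_k`, and
conversely. The `(n - q)`-th Hasse derivative, with coefficients
`(j + n - q choose n - q) c_{j+n-q}`, inherits these bounds, and its leading coefficient
`(n choose q) c_n` has absolute value `|c_n|`. So the `(n - q)`-th Hasse derivative of `f`, a
polynomial over `K` of degree `q`, has a root in the disk, and that root has degree at most `q`
over `K`. -/

theorem choose_pow_mul_modEq (p : ℕ) [Fact p.Prime] (e m : ℕ) :
    (p ^ e * m).choose (p ^ e) ≡ m [ZMOD p] := by
  have hp : 0 < p := (Fact.out : p.Prime).pos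
  refine (Choose.choose_modEq_choose_mul_prod_range_choose e).trans ?_
  have hdigit : ∀ i ∈ Finset.range e, p ^ e * m / p ^ i % p = 0 ∧ p ^ e / p ^ i % p = 0 := by
    intro i hi
    have hsplit : p ^ e = p ^ i * (p * p ^ (e - i - 1)) := by
      rw [← pow_succ', ← pow_add]; congr 1; have := Finset.mem_range.mp hi; omega
    rw [hsplit, mul_assoc, Nat.mul_div_cancel_left _ (pow_pos hp i),
      Nat.mul_div_cancel_left _ (pow_pos hp i)]
    simp [mul_assoc]
  rw [Finset.prod_congr rfl fun i hi => by rw [(hdigit i hi).1, (hdigit i hi).2]]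
  simp [Nat.pos_of_ne_zero (pow_ne_zero e hp.ne')]

theorem cast_choose_ordProj_ne_zero {R : Type*} [Ring R] [NoZeroDivisors R] [Nontrivial R]
    (p : ℕ) [CharP R p] {n : ℕ} (hn : n ≠ 0) :
    (n.choose (p ^ n.factorization p) : R) ≠ 0 := by
  rcases CharP.char_is_prime_or_zero R p with hp | rfl
  · have : Fact p.Prime := ⟨hp⟩
    have hmod := choose_pow_mul_modEq p (n.factorization p) (n / p ^ n.factorization p)
    rw [Nat.ordProj_mul_ordCompl_eq_self] at hmod
    rw [← Int.cast_natCast, (CharP.intCast_eq_intCast R p).mpr hmod, Int.cast_natCast, Ne,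
      CharP.cast_eq_zero_iff R p]
    exact Nat.not_dvd_ordCompl hp hn
  · have : CharZero R := CharP.charP_to_charZero R
    simpa [Nat.factorization_eq_zero_of_not_prime n Nat.not_prime_zero] using hn

theorem apply_eq_one_of_isUnit {v : AbsoluteValue Ω ℝ} {hv : IsNonarchimedean v}
    {x : integers v hv} (hx : IsUnit x) : v x = 1 := by
  obtain ⟨y, hxy⟩ := hx.exists_right_inv
  have hprod : v x * v y = 1 := by
    simpa [v.map_mul] using congrArg (fun z : integers v hv => v (z : Ω)) hxy
  refine le_antisymm x.2 ?_
  calc 1 = v x * v y := hprod.symm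
    _ ≤ v x * 1 := by gcongr; exact y.2
    _ = v x := mul_one _

theorem apply_natCast_eq_one {v : AbsoluteValue Ω ℝ} {hv : IsNonarchimedean v} {k : ℕ}
    (hk : (k : resField v hv) ≠ 0) : v k = 1 := by
  have hunit : IsUnit (k : integers v hv) :=
    (IsLocalRing.residue_ne_zero_iff_isUnit _).mp (by rw [map_natCast]; exact hk)
  simpa using apply_eq_one_of_isUnit hunit

theorem _root_.IsNonarchimedean.apply_esymm_le {R : Type*} [CommRing R] [IsDomain R]
    {v : AbsoluteValue R ℝ} (hv : IsNonarchimedean v) {s : ℝ} (hs : 0 ≤ s)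
    {M : Multiset R} (hM : ∀ x ∈ M, v x ≤ s) (m : ℕ) : v (M.esymm m) ≤ s ^ m := by
  obtain ⟨t, ht, hle⟩ := hv.multiset_image_add Multiset.prod (M.powersetCard m)
  rcases eq_or_ne (M.powersetCard m) 0 with h0 | h0
  · simp [Multiset.esymm, h0, pow_nonneg hs]
  obtain ⟨htM, rfl⟩ := Multiset.mem_powersetCard.mp (ht h0)
  calc v (M.esymm t.card) ≤ v t.prod := by simpa [Multiset.esymm] using hle
    _ = (t.map v).prod := map_multiset_prod v t
    _ ≤ s ^ t.card := Multiset.prod_map_le_pow_card (fun x _ => v.nonneg x)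
        fun x hx => hM x (Multiset.mem_of_le htM hx)

theorem _root_.IsNonarchimedean.apply_coeff_le_of_roots_le {R : Type*} [CommRing R] [IsDomain R]
    {v : AbsoluteValue R ℝ} (hv : IsNonarchimedean v) {P : R[X]}
    (hcard : Multiset.card P.roots = P.natDegree) {s : ℝ} (hs : 0 ≤ s)
    (hroots : ∀ x ∈ P.roots, v x ≤ s) (k : ℕ) :
    v (P.coeff k) ≤ v P.leadingCoeff * s ^ (P.natDegree - k) := by
  rcases le_or_gt k P.natDegree with hk | hk
  · rw [coeff_eq_esymm_roots_of_card hcard hk, v.map_mul, v.map_mul, v.map_pow, v.map_neg,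
      v.map_one, one_pow, mul_one]
    exact mul_le_mul_of_nonneg_left (hv.apply_esymm_le hs hroots _) (v.nonneg _)
  · rw [coeff_eq_zero_of_natDegree_lt hk, v.map_zero]
    positivity

theorem _root_.IsNonarchimedean.apply_le_of_isRoot {R : Type*} [CommRing R] [IsDomain R]
    {v : AbsoluteValue R ℝ} (hv : IsNonarchimedean v) {P : R[X]} (hP : P ≠ 0) {s : ℝ}
    (hs : 0 ≤ s) (hcoeff : ∀ k, v (P.coeff k) ≤ v P.leadingCoeff * s ^ (P.natDegree - k))
    {x : R} (hx : P.IsRoot x) : v x ≤ s := by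
  by_contra! hsx
  have hlead : ∀ k ∈ Finset.range (P.natDegree + 1), k ≠ P.natDegree →
      v (P.coeff k * x ^ k) < v (P.coeff P.natDegree * x ^ P.natDegree) := by
    intro k hkmem hkn
    have hk : k < P.natDegree := by have := Finset.mem_range.mp hkmem; omega
    have hlc : 0 < v P.leadingCoeff := v.pos (leadingCoeff_ne_zero.mpr hP)
    calc v (P.coeff k * x ^ k) ≤ v P.leadingCoeff * s ^ (P.natDegree - k) * v x ^ k := by
          rw [v.map_mul, v.map_pow]; gcongr; exact hcoeff k
      _ < v P.leadingCoeff * v x ^ (P.natDegree - k) * v x ^ k := by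
          gcongr
          · exact pow_pos (hs.trans_lt hsx) k
          · omega
      _ = v (P.coeff P.natDegree * x ^ P.natDegree) := by
          rw [v.map_mul, v.map_pow, mul_assoc, ← pow_add, Nat.sub_add_cancel hk.le]; rfl
  have hsum := hv.apply_sum_eq_of_lt (fun y => (v.map_neg y).symm)
    (Finset.self_mem_range_succ P.natDegree) hlead
  rw [← eval_eq_sum_range, hx.eq_zero, v.map_zero, v.map_mul, v.map_pow] at hsum
  exact (mul_pos (v.pos (leadingCoeff_ne_zero.mpr hP)) (pow_pos (hs.trans_lt hsx) _)).ne hsum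

theorem taylor_hasseDeriv {R : Type*} [CommRing R] (a : R) (k : ℕ) (P : R[X]) :
    taylor a (hasseDeriv k P) = hasseDeriv k (taylor a P) := by
  ext j
  rw [taylor_coeff, hasseDeriv_coeff, taylor_coeff]
  have h := LinearMap.congr_fun (hasseDeriv_comp (R := R) j k) P
  simp only [LinearMap.comp_apply, LinearMap.smul_apply] at h
  rw [h, eval_smul, nsmul_eq_mul, Nat.choose_symm_add]

theorem hasseDeriv_map {R S : Type*} [Semiring R] [Semiring S] (σ : R →+* S) (k : ℕ)
    (P : R[X]) : (hasseDeriv k P).map σ = hasseDeriv k (P.map σ) := by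
  ext j
  simp [hasseDeriv_coeff]

theorem coeff_hasseDeriv_natDegree_sub {R : Type*} [Semiring R] (P : R[X]) {k : ℕ}
    (hk : k ≤ P.natDegree) :
    (hasseDeriv k P).coeff (P.natDegree - k) = P.natDegree.choose k * P.leadingCoeff := by
  rw [hasseDeriv_coeff, Nat.sub_add_cancel hk]
  rfl

theorem natDegree_hasseDeriv_of_cast_choose_ne_zero {R : Type*} [Semiring R] [NoZeroDivisors R]
    {P : R[X]} (hP : P ≠ 0) {k : ℕ} (hk : k ≤ P.natDegree)
    (hchoose : (P.natDegree.choose k : R) ≠ 0) :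
    (hasseDeriv k P).natDegree = P.natDegree - k :=
  le_antisymm (natDegree_hasseDeriv_le P k) <| le_natDegree_of_ne_zero <| by
    rw [coeff_hasseDeriv_natDegree_sub P hk]
    exact mul_ne_zero hchoose (leadingCoeff_ne_zero.mpr hP)

theorem _root_.IsNonarchimedean.apply_le_of_isRoot_hasseDeriv {R : Type*} [CommRing R]
    [IsDomain R] {v : AbsoluteValue R ℝ} (hv : IsNonarchimedean v) {P : R[X]} (hP : P ≠ 0)
    (hcard : Multiset.card P.roots = P.natDegree) {s : ℝ} (hs : 0 ≤ s)
    (hroots : ∀ x ∈ P.roots, v x ≤ s) {k : ℕ} (hk : k ≤ P.natDegree)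
    (hchoose : v (P.natDegree.choose k : R) = 1) {x : R} (hx : (hasseDeriv k P).IsRoot x) :
    v x ≤ s := by
  have hchoose0 : (P.natDegree.choose k : R) ≠ 0 := fun h => by simp [h] at hchoose
  have hdeg := natDegree_hasseDeriv_of_cast_choose_ne_zero hP hk hchoose0
  have hlead : v (hasseDeriv k P).leadingCoeff = v P.leadingCoeff := by
    rw [leadingCoeff, hdeg, coeff_hasseDeriv_natDegree_sub P hk, v.map_mul, hchoose, one_mul]
  have hH0 : hasseDeriv k P ≠ 0 := fun h => by
    rw [h, leadingCoeff_zero, v.map_zero, eq_comm, v.eq_zero, leadingCoeff_eq_zero] at hlead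
    exact hP hlead
  refine hv.apply_le_of_isRoot hH0 hs (fun j => ?_) hx
  rw [hasseDeriv_coeff, v.map_mul, hlead, hdeg, Nat.sub_sub, add_comm k j]
  calc _ ≤ 1 * v P.leadingCoeff * s ^ (P.natDegree - (j + k)) := by
        rw [mul_assoc]
        exact mul_le_mul hv.apply_natCast_le_one
          (hv.apply_coeff_le_of_roots_le hcard hs hroots _) (v.nonneg _) zero_le_one
    _ = _ := by rw [one_mul]

theorem _root_.IsNonarchimedean.apply_sub_le_of_isRoot_hasseDeriv {F : Type*} [Field F]
    [IsAlgClosed F] {v : AbsoluteValue F ℝ} (hv : IsNonarchimedean v) {P : F[X]} (hP : P ≠ 0)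
    {a : F} {s : ℝ} (hs : 0 ≤ s) (hroots : ∀ x, P.IsRoot x → v (x - a) ≤ s) {k : ℕ}
    (hk : k ≤ P.natDegree) (hchoose : v (P.natDegree.choose k : F) = 1) {x : F}
    (hx : (hasseDeriv k P).IsRoot x) : v (x - a) ≤ s := by
  have hT0 : taylor a P ≠ 0 := by rwa [Ne, taylor_eq_zero]
  refine hv.apply_le_of_isRoot_hasseDeriv hT0 (splits_iff_card_roots.mp (IsAlgClosed.splits _))
    hs (fun y hy => ?_) (k := k) (by rwa [natDegree_taylor]) (by rwa [natDegree_taylor]) ?_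
  · simpa using hroots (y + a) (by simpa [taylor_eval] using (mem_roots hT0).mp hy)
  · rw [IsRoot, ← taylor_hasseDeriv, taylor_eval, sub_add_cancel]
    exact hx

theorem finrank_adjoin_le_natDegree {K L : Type*} [Field K] [Field L] [Algebra K L] {g : K[X]}
    (hg : g ≠ 0) {x : L} (hx : aeval x g = 0) :
    Module.finrank K (IntermediateField.adjoin K ({x} : Set L)) ≤ g.natDegree := by
  rw [IntermediateField.adjoin.finrank (isAlgebraic_iff_isIntegral.mp ⟨g, hg, hx⟩)]
  exact natDegree_le_natDegree (minpoly.degree_le_of_ne_zero K x hg hx)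

/-- **Lemma (pextn).** If all roots of a degree-`n` polynomial `f ∈ K[z]` lie in a closed
disk `V ⊆ ℂ_v`, then `V` contains a point `α` with `[K(α):K] ≤ p^{v_p(n)}`. -/
theorem point_in_root_disk {K Ω : Type} [Field K] [Field Ω] [Algebra K Ω] [IsAlgClosed Ω]
    (v : AbsoluteValue Ω ℝ) (hv : IsNonarchimedean v)
    (p : ℕ) (hp : CharP (resField v hv) p)
    (f : Polynomial K) (n : ℕ) (hn : 1 ≤ n) (hdeg : f.natDegree = n)
    (a : Ω) (s : ℝ) (hs : 0 < s)
    (hroots : ∀ x : Ω, Polynomial.aeval x f = 0 → v (x - a) ≤ s) :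
    ∃ α : Ω, v (α - a) ≤ s ∧ IsAlgebraic K α ∧
      Module.finrank K (IntermediateField.adjoin K ({α} : Set Ω)) ≤ p ^ (n.factorization p) := by
  set q := p ^ n.factorization p
  have hn0 : n ≠ 0 := by omega
  have hqn : q ≤ n := Nat.ordProj_le p hn0
  have hq : 0 < q := Nat.ordProj_pos n p
  set F := f.map (algebraMap K Ω)
  have hF : F.natDegree = n := by rw [natDegree_map, hdeg]
  have hF0 : F ≠ 0 := fun h => by rw [h, natDegree_zero] at hF; omega
  have hchoose : v (F.natDegree.choose (n - q) : Ω) = 1 := by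
    rw [hF, Nat.choose_symm hqn]
    exact apply_natCast_eq_one (cast_choose_ordProj_ne_zero p hn0)
  have hG : (hasseDeriv (n - q) F).natDegree = q := by
    rw [natDegree_hasseDeriv_of_cast_choose_ne_zero hF0 (by omega)
      (fun h => by simp [h] at hchoose), hF]
    omega
  obtain ⟨α, hα⟩ := IsAlgClosed.exists_root (hasseDeriv (n - q) F)
    (natDegree_pos_iff_degree_pos.mp (hG.symm ▸ hq)).ne'
  have hgF : (hasseDeriv (n - q) f).map (algebraMap K Ω) = hasseDeriv (n - q) F :=
    hasseDeriv_map _ _ _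
  have hg0 : hasseDeriv (n - q) f ≠ 0 := fun h => by simp [h, ← hgF] at hG; omega
  have hgα : aeval α (hasseDeriv (n - q) f) = 0 := by rwa [aeval_def, ← eval_map, hgF]
  refine ⟨α, ?_, ⟨_, hg0, hgα⟩, ?_⟩
  · refine hv.apply_sub_le_of_isRoot_hasseDeriv hF0 hs.le (fun x hx => hroots x ?_) (by omega)
      hchoose hα
    rwa [aeval_def, ← eval_map]
  · calc _ ≤ (hasseDeriv (n - q) f).natDegree := finrank_adjoin_le_natDegree hg0 hgα
      _ ≤ f.natDegree - (n - q) := natDegree_hasseDeriv_le f (n - q)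
      _ = q := by omega

end PGR
end
end

section
/- Let K be a field with non-archimedean absolute value, and let φ ∈ K(z) be a rational function of degree d ≥ 2 with a totally invariant type II point ζ(c,r). Let U and V be distinct components of the complement of ζ(c,r) that both contain points of P¹(K), and suppose φ(U) ⊆ U while φ(V) ⊆ U. Then there is a point α ∈ P¹(K̄) ∖ (U ∪ V) such that [K(α):K] ≤ d. -/
open Polynomial

noncomputable section

namespace PGR

open scoped Classical

variable {Ω : Type} [Field Ω]

/-! Take a point `y ∈ V ∩ P¹(K)`. As `U` and `V` are disjoint and `φ` maps both into `U`, no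
preimage of `y` lies in `U ∪ V`. A preimage of small degree exists because `y` is `K`-rational: it
is a root of `num - y · denom` (of `denom` if `y = ∞`), a `K`-polynomial of degree at most `d`,
or `∞` itself when that polynomial is constant. -/

theorem _root_.IsNonarchimedean.apply_sub_le_max {v : AbsoluteValue Ω ℝ}
    (hv : IsNonarchimedean v) (x y z : Ω) : v (x - z) ≤ max (v (x - y)) (v (y - z)) := by
  simpa only [sub_add_sub_cancel] using hv (x - y) (y - z)

section Components

variable {v : AbsoluteValue Ω ℝ} {r : ℝ}

theorem openDiskP1_eq_of_sub_lt (hv : IsNonarchimedean v) {b b' : Ω} (h : v (b' - b) < r) :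
    openDiskP1 v b' r = openDiskP1 v b r := by
  have h' : v (b - b') < r := by rwa [v.map_sub]
  ext x
  constructor
  · rintro ⟨y, rfl, hy⟩
    exact ⟨y, rfl, (hv.apply_sub_le_max y b' b).trans_lt (max_lt hy h)⟩
  · rintro ⟨y, rfl, hy⟩
    exact ⟨y, rfl, (hv.apply_sub_le_max y b b').trans_lt (max_lt hy h')⟩

theorem openDiskP1_eq_of_not_disjoint (hv : IsNonarchimedean v) {b b' : Ω}
    (h : ¬Disjoint (openDiskP1 v b r) (openDiskP1 v b' r)) :
    openDiskP1 v b r = openDiskP1 v b' r := by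
  obtain ⟨_, ⟨y, rfl, hy⟩, ⟨y', hyy', hy'⟩⟩ := Set.not_disjoint_iff.mp h
  rw [OnePoint.coe_eq_coe] at hyy'
  subst hyy'
  exact (openDiskP1_eq_of_sub_lt hv hy).symm.trans (openDiskP1_eq_of_sub_lt hv hy')

theorem disjoint_openDiskP1_outerComponent (hv : IsNonarchimedean v) {b c : Ω}
    (hb : v (b - c) ≤ r) : Disjoint (openDiskP1 v b r) (outerComponent v c r) := by
  rw [Set.disjoint_left]
  rintro _ ⟨y, rfl, hy⟩ (h | ⟨y', hyy', hy'⟩)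
  · exact OnePoint.coe_ne_infty y h
  · rw [OnePoint.coe_eq_coe] at hyy'
    subst hyy'
    exact hy'.not_ge ((hv.apply_sub_le_max y b c).trans (max_le hy.le hb))

theorem IsComponentOf.disjoint (hv : IsNonarchimedean v) {c : Ω} {U V : Set (OnePoint Ω)}
    (hU : IsComponentOf v c r U) (hV : IsComponentOf v c r V) (hUV : U ≠ V) : Disjoint U V := by
  rcases hU with ⟨b, hb, rfl⟩ | rfl <;> rcases hV with ⟨b', hb', rfl⟩ | rfl
  · exact by_contra fun h => hUV (openDiskP1_eq_of_not_disjoint hv h)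
  · exact disjoint_openDiskP1_outerComponent hv hb
  · exact (disjoint_openDiskP1_outerComponent hv hb').symm
  · exact absurd rfl hUV

end Components

section Evaluation

variable {F : Type} [Field F] {ψ : RatFunc F}

theorem evalP1_coe_eq_infty {x : F} (h : ψ.denom.eval x = 0) :
    evalP1 ψ (x : OnePoint F) = OnePoint.infty := by
  simp only [evalP1, h, if_true]

theorem evalP1_coe_eq_coe {x a : F} (h : (ψ.num - C a * ψ.denom).eval x = 0) :
    evalP1 ψ (x : OnePoint F) = (a : OnePoint F) := by
  rw [eval_sub, eval_mul, eval_C, sub_eq_zero] at h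
  have hden : ψ.denom.eval x ≠ 0 := by
    intro h0
    obtain ⟨s, t, hst⟩ := ψ.isCoprime_num_denom
    simpa [h, h0] using congrArg (eval x) hst
  simp only [evalP1, if_neg hden, h, mul_div_cancel_right₀ _ hden]

theorem evalP1_infty_eq_infty (h : ψ.denom.natDegree < ψ.num.natDegree) :
    evalP1 ψ OnePoint.infty = OnePoint.infty := by
  simp only [evalP1, if_pos h]

theorem evalP1_infty_eq_coe {a : F} (h : (ψ.num - C a * ψ.denom).natDegree < ratfuncDegree ψ) :
    evalP1 ψ OnePoint.infty = (a : OnePoint F) := by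
  have hcoeff : ψ.num.coeff (ratfuncDegree ψ) = a * ψ.denom.coeff (ratfuncDegree ψ) := by
    have := coeff_eq_zero_of_natDegree_lt h
    rwa [coeff_sub, coeff_C_mul, sub_eq_zero] at this
  have hlead : ψ.denom.leadingCoeff ≠ 0 := leadingCoeff_ne_zero.mpr ψ.denom_ne_zero
  simp only [evalP1]
  rcases lt_trichotomy ψ.num.natDegree ψ.denom.natDegree with hnm | hnm | hnm
  · rw [ratfuncDegree, max_eq_right hnm.le, coeff_eq_zero_of_natDegree_lt hnm] at hcoeff
    have ha : a = 0 := (mul_eq_zero.mp hcoeff.symm).resolve_right hlead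
    rw [if_neg hnm.not_gt, if_pos hnm, ha]
  · rw [ratfuncDegree, ← hnm, max_self] at hcoeff
    rw [if_neg hnm.not_gt, if_neg hnm.not_lt, ← coeff_natDegree, hcoeff, hnm, coeff_natDegree,
      mul_div_cancel_right₀ _ hlead]
  · rw [ratfuncDegree, max_eq_left hnm.le, coeff_eq_zero_of_natDegree_lt hnm, mul_zero] at hcoeff
    have hnum : ψ.num ≠ 0 := fun h0 => by simp [h0] at hnm
    exact absurd hcoeff (leadingCoeff_ne_zero.mpr hnum)

end Evaluation

section BaseChange

variable {K F : Type} [Field K] [Field F]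

theorem ratfuncMap_num_denom (σ : K →+* F) (φ : RatFunc K) :
    (ratfuncMap σ φ).num = φ.num.map σ ∧ (ratfuncMap σ φ).denom = φ.denom.map σ := by
  have hcop : IsCoprime (φ.num.map σ) (φ.denom.map σ) := by
    simpa only [coe_mapRingHom] using φ.isCoprime_num_denom.map (mapRingHom σ)
  have hgcd : gcd (φ.num.map σ) (φ.denom.map σ) = 1 := by
    rw [← normalize_gcd, normalize_eq_one, gcd_isUnit_iff_isRelPrime]
    exact hcop.isRelPrime
  have hden : φ.denom.map σ ≠ 0 := map_ne_zero φ.denom_ne_zero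
  have hmonic : (φ.denom.map σ).leadingCoeff = 1 := (φ.monic_denom.map σ).leadingCoeff
  simp only [ratfuncMap, RatFunc.num_div, RatFunc.denom_div _ hden, hgcd,
    EuclideanDomain.div_one, hmonic, inv_one, map_one, one_mul, and_self]

theorem natDegree_num_sub_C_mul_denom_le (φ : RatFunc K) (a : K) :
    (φ.num - C a * φ.denom).natDegree ≤ ratfuncDegree φ :=
  (natDegree_sub_le _ _).trans (max_le_max le_rfl (natDegree_C_mul_le a φ.denom))

theorem p1AlgDegLE_coe_of_aeval_eq_zero [Algebra K F] {Q : K[X]} {n : ℕ} {α : F} (hQ : Q ≠ 0)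
    (hQn : Q.natDegree ≤ n) (hα : aeval α Q = 0) : P1AlgDegLE K (α : OnePoint F) n := by
  have halg : IsAlgebraic K α := ⟨Q, hQ, hα⟩
  refine Or.inr ⟨α, rfl, halg, ?_⟩
  rw [IntermediateField.adjoin.finrank halg.isIntegral]
  exact (natDegree_le_of_dvd (minpoly.dvd K α hα) hQ).trans hQn

theorem exists_evalP1_ratfuncMap_eq [Algebra K F] [IsAlgClosed F] {φ : RatFunc K}
    (hφ : 0 < ratfuncDegree φ) {y : OnePoint F} (hy : IsP1Pt K y) :
    ∃ α, evalP1 (ratfuncMap (algebraMap K F) φ) α = y ∧ P1AlgDegLE K α (ratfuncDegree φ) := by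
  obtain ⟨hnum, hden⟩ := ratfuncMap_num_denom (algebraMap K F) φ
  rcases hy with rfl | ⟨a, rfl⟩
  · by_cases hpos : 0 < φ.denom.natDegree
    · obtain ⟨α, hα⟩ := IsAlgClosed.exists_aeval_eq_zero F φ.denom
        (natDegree_pos_iff_degree_pos.mp hpos).ne'
      refine ⟨α, evalP1_coe_eq_infty ?_,
        p1AlgDegLE_coe_of_aeval_eq_zero φ.denom_ne_zero (le_max_right _ _) hα⟩
      rwa [hden, eval_map_algebraMap]
    · refine ⟨OnePoint.infty, evalP1_infty_eq_infty ?_, Or.inl rfl⟩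
      rw [hnum, hden, natDegree_map, natDegree_map]
      rw [ratfuncDegree] at hφ
      omega
  · set P := φ.num - C a * φ.denom
    have hPmap : (ratfuncMap (algebraMap K F) φ).num
        - C (algebraMap K F a) * (ratfuncMap (algebraMap K F) φ).denom = P.map (algebraMap K F) := by
      rw [hnum, hden, Polynomial.map_sub, Polynomial.map_mul, map_C]
    by_cases hpos : 0 < P.natDegree
    · obtain ⟨α, hα⟩ := IsAlgClosed.exists_aeval_eq_zero F P
        (natDegree_pos_iff_degree_pos.mp hpos).ne'
      refine ⟨α, evalP1_coe_eq_coe ?_, p1AlgDegLE_coe_of_aeval_eq_zero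
        (ne_zero_of_natDegree_gt hpos) (natDegree_num_sub_C_mul_denom_le φ a) hα⟩
      rwa [hPmap, eval_map_algebraMap]
    · refine ⟨OnePoint.infty, evalP1_infty_eq_coe ?_, Or.inl rfl⟩
      rw [hPmap, natDegree_map, ratfuncDegree, hnum, hden, natDegree_map, natDegree_map]
      exact (Nat.eq_zero_of_not_pos hpos).trans_lt hφ

end BaseChange

theorem two_components_ext_d_general {K Ω : Type} [Field K] [Field Ω] [Algebra K Ω]
    [IsAlgClosed Ω]
    (v : AbsoluteValue Ω ℝ) (hv : IsNonarchimedean v)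
    (φ : RatFunc K) (d : ℕ) (hd : 2 ≤ d) (hdeg : ratfuncDegree φ = d)
    (c : Ω) (r : ℝ)
    (U V : Set (OnePoint Ω)) (hU : IsComponentOf v c r U) (hV : IsComponentOf v c r V)
    (hUV : U ≠ V)
    (hKV : ∃ x ∈ V, IsP1Pt K x)
    (hfixU : Set.MapsTo (evalP1 (ratfuncMap (algebraMap K Ω) φ)) U U)
    (hVU : Set.MapsTo (evalP1 (ratfuncMap (algebraMap K Ω) φ)) V U) :
    ∃ α : OnePoint Ω, α ∉ U ∧ α ∉ V ∧ P1AlgDegLE K α d := by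
  obtain ⟨y, hyV, hyK⟩ := hKV
  have hyU : y ∉ U := fun hyU => (hU.disjoint hv hV hUV).notMem_of_mem_right hyV hyU
  obtain ⟨α, hαy, hα⟩ := exists_evalP1_ratfuncMap_eq (by omega : 0 < ratfuncDegree φ) hyK
  exact ⟨α, fun hαU => hyU (hαy ▸ hfixU hαU), fun hαV => hyU (hαy ▸ hVU hαV), hdeg ▸ hα⟩

/-- **Theorem (twocomps1).** If `U, V` are distinct components of the complement of a
totally invariant type II point, both meeting `P¹(K)`, with `U` fixed and `φ(V) ⊆ U`,
then there is `α ∈ P¹(K̄) ∖ (U ∪ V)` with `[K(α):K] ≤ d`. -/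
theorem two_components_ext_d {K Ω : Type} [Field K] [Field Ω] [Algebra K Ω]
    [IsAlgClosed Ω]
    (v : AbsoluteValue Ω ℝ) (hv : IsNonarchimedean v)
    (φ : RatFunc K) (d : ℕ) (hd : 2 ≤ d) (hdeg : ratfuncDegree φ = d)
    (c : Ω) (r : ℝ)
    (hinv : TotallyInvariant v hv (ratfuncMap (algebraMap K Ω) φ) c r)
    (U V : Set (OnePoint Ω)) (hU : IsComponentOf v c r U) (hV : IsComponentOf v c r V)
    (hUV : U ≠ V)
    (hKU : ∃ x ∈ U, IsP1Pt K x) (hKV : ∃ x ∈ V, IsP1Pt K x)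
    (hfixU : Set.MapsTo (evalP1 (ratfuncMap (algebraMap K Ω) φ)) U U)
    (hVU : Set.MapsTo (evalP1 (ratfuncMap (algebraMap K Ω) φ)) V U) :
    ∃ α : OnePoint Ω, α ∉ U ∧ α ∉ V ∧ P1AlgDegLE K α d :=
  two_components_ext_d_general v hv φ d hd hdeg c r U V hU hV hUV hKV hfixU hVU

end PGR
end
end

section
/- Let φ ∈ ℂ_v(z) be a rational function with no poles in D(0,1) = {x ∈ ℂ_v : |x| < 1}, and write φ(z) = Σ_{n≥0} c_n z^n as a power series converging on D(0,1). Suppose there is an integer ℓ ≥ 2 such that |c_n| < 1 for all n < ℓ, |c_ℓ| = 1, and |c_n| ≤ 1 for all n > ℓ. Then φ has exactly one fixed point in D(0,1): there is a unique x ∈ ℂ_v with |x| < 1 and φ(x) = x. -/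
open Polynomial

noncomputable section

namespace PGR

open scoped Classical

variable {Ω : Type} [Field Ω]

/-! The fixed points of `φ` in the open unit disk are the roots there of
`F = num - X * denom`. For `|c₀| < |x| < 1` the dominant term of `φ(x) - x` is `(c₁ - 1) x`
with `c₁ - 1` a unit, and `denom` has no zeros in the disk, so `|F(x)| = |denom(0)| |x|`.
On the other hand, for `|x| < 1` larger than all roots of `F` in the disk,
`|F(x)| = C |x| ^ m` where `m` counts those roots with multiplicity. Over an algebraically
closed field a nontrivial absolute value takes values arbitrarily close to `1` from below,
so both formulas hold at two different radii, which forces `m = 1`. If the absolute value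
is trivial, the disk is `{0}` and `φ(0) = c₀ = 0`. -/

open Filter Topology

lemma eq_one_of_mul_pow_eq_mul {C D t₁ t₂ : ℝ} {m : ℕ} (hD : D ≠ 0) (ht₁ : 0 < t₁)
    (ht : t₁ < t₂) (h₁ : C * t₁ ^ m = D * t₁) (h₂ : C * t₂ ^ m = D * t₂) :
    m = 1 := by
  have hC : C ≠ 0 := by
    rintro rfl
    exact mul_ne_zero hD ht₁.ne' (by simpa using h₁.symm)
  have hratio : (t₁ / t₂) ^ m = (t₁ / t₂) ^ 1 := by
    rw [div_pow, pow_one, ← mul_div_mul_left _ _ hC, h₁, h₂, mul_div_mul_left _ _ hD]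
  have ht₂ : 0 < t₂ := ht₁.trans ht
  exact (pow_right_inj₀ (div_pos ht₁ ht₂) ((div_lt_one ht₂).mpr ht).ne).mp hratio

lemma existsUnique_isRoot_of_card_filter_roots_eq_one {R : Type*} [CommRing R] [IsDomain R]
    {p : R[X]} {P : R → Prop} [DecidablePred P] (h : Multiset.card (p.roots.filter P) = 1) :
    ∃! x, P x ∧ p.IsRoot x := by
  obtain ⟨ρ, hρ⟩ := Multiset.card_eq_one.mp h
  have hp : p ≠ 0 := by
    rintro rfl
    simp at hρ
  have hmem (x : R) : x ∈ p.roots.filter P ↔ P x ∧ p.IsRoot x := by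
    rw [Multiset.mem_filter, mem_roots hp, and_comm]
  refine ⟨ρ, (hmem ρ).mp (by simp [hρ]), fun x hx => ?_⟩
  simpa [hρ] using (hmem x).mpr hx

lemma eval_sub_X_mul_eq {R : Type*} [Field R] {p q : R[X]} {x : R} (hq : q.eval x ≠ 0) :
    (p - X * q).eval x = (p.eval x / q.eval x - x) * q.eval x := by
  rw [sub_mul, div_mul_cancel₀ _ hq]
  simp

section NonarchimedeanDisk

variable {K : Type*} [Field K] {v : AbsoluteValue K ℝ}

lemma abv_sub_eq_left_of_lt (hv : IsNonarchimedean v) {x y : K} (h : v y < v x) :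
    v (x - y) = v x := by
  rw [sub_eq_add_neg]
  exact hv.add_eq_left_of_lt (by rwa [v.map_neg])

lemma abv_sub_eq_right_of_lt (hv : IsNonarchimedean v) {x y : K} (h : v x < v y) :
    v (x - y) = v y := by
  rw [v.map_sub, abv_sub_eq_left_of_lt hv h]

lemma exists_lt_abv_lt_one [IsAlgClosed K] (hnt : v.IsNontrivial) {r : ℝ} (hr : r < 1) :
    ∃ x, r < v x ∧ v x < 1 := by
  obtain ⟨a, ha0, ha1⟩ := hnt.exists_abv_lt_one
  have hpow := tendsto_pow_atTop_nhds_zero_of_lt_one (le_max_right r 0) (max_lt hr one_pos)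
  obtain ⟨n, hn, hn1⟩ :=
    ((hpow.eventually_lt_const (v.pos ha0)).and (eventually_ge_atTop 1)).exists
  obtain ⟨x, rfl⟩ := IsAlgClosed.exists_pow_nat_eq a (n := n) (by omega)
  rw [map_pow] at hn ha1
  refine ⟨x, (le_max_left r 0).trans_lt (lt_of_pow_lt_pow_left₀ n (v.nonneg x) hn), ?_⟩
  exact (pow_lt_one_iff_of_nonneg (v.nonneg x) (by omega)).mp ha1

lemma abv_eval_eq_mul_prod_roots [IsAlgClosed K] (p : K[X]) (x : K) :
    v (p.eval x) = v p.leadingCoeff * (p.roots.map fun ρ => v (x - ρ)).prod := by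
  rw [(IsAlgClosed.splits p).eval_eq_prod_roots, map_mul, map_multiset_prod, Multiset.map_map]
  rfl

lemma abv_eval_eq_abv_eval_zero [IsAlgClosed K] (hv : IsNonarchimedean v) {p : K[X]}
    (hroots : ∀ ρ ∈ p.roots, 1 ≤ v ρ) {x : K} (hx : v x < 1) :
    v (p.eval x) = v (p.eval 0) := by
  rw [abv_eval_eq_mul_prod_roots, abv_eval_eq_mul_prod_roots]
  congr 2
  refine Multiset.map_congr rfl fun ρ hρ => ?_
  rw [abv_sub_eq_right_of_lt hv (hx.trans_le (hroots ρ hρ)), zero_sub, v.map_neg]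

lemma exists_abv_eval_eq_mul_pow [IsAlgClosed K] (hv : IsNonarchimedean v) (p : K[X]) :
    ∃ r₀ < 1, ∃ C : ℝ, ∀ x, r₀ < v x → v x < 1 →
      v (p.eval x) = C * v x ^ Multiset.card (p.roots.filter (v · < 1)) := by
  set inner := p.roots.filter (v · < 1)
  set outer := p.roots.filter fun ρ => ¬ v ρ < 1
  let T := insert 0 (inner.map v).toFinset
  have hT : T.Nonempty := Finset.insert_nonempty _ _
  refine ⟨T.max' hT, ?_, v p.leadingCoeff * (outer.map v).prod, fun x hr₀ hx => ?_⟩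
  · simp only [T, Finset.max'_lt_iff, Finset.mem_insert, Multiset.mem_toFinset,
      Multiset.mem_map, forall_eq_or_imp, forall_exists_index, and_imp, forall_apply_eq_imp_iff₂]
    exact ⟨one_pos, fun ρ hρ => (Multiset.mem_filter.mp hρ).2⟩
  have hinner : (inner.map fun ρ => v (x - ρ)) = inner.map fun _ => v x :=
    Multiset.map_congr rfl fun ρ hρ => abv_sub_eq_left_of_lt hv <|
      (T.le_max' _ (by simp [T, Multiset.mem_map_of_mem v hρ])).trans_lt hr₀
  have houter : (outer.map fun ρ => v (x - ρ)) = outer.map v :=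
    Multiset.map_congr rfl fun ρ hρ => abv_sub_eq_right_of_lt hv <|
      hx.trans_le (not_lt.mp (Multiset.mem_filter.mp hρ).2)
  rw [abv_eval_eq_mul_prod_roots, ← Multiset.filter_add_not (v · < 1) p.roots, Multiset.map_add,
    Multiset.prod_add, hinner, houter, Multiset.map_const', Multiset.prod_replicate]
  ring

lemma card_roots_filter_abv_lt_one_eq_one [IsAlgClosed K] (hv : IsNonarchimedean v)
    (hnt : v.IsNontrivial) {p : K[X]} {c D : ℝ} (hc : c < 1) (hD : D ≠ 0)
    (hlin : ∀ x, c < v x → v x < 1 → v (p.eval x) = D * v x) :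
    Multiset.card (p.roots.filter (v · < 1)) = 1 := by
  obtain ⟨r₀, hr₀, C, hpow⟩ := exists_abv_eval_eq_mul_pow hv p
  obtain ⟨x₁, hx₁, hx₁1⟩ :=
    exists_lt_abv_lt_one hnt (max_lt (max_lt hc hr₀) zero_lt_one)
  obtain ⟨x₂, hx₂, hx₂1⟩ := exists_lt_abv_lt_one hnt hx₁1
  simp only [max_lt_iff] at hx₁
  have eq_at {x : K} (hx : v x₁ ≤ v x) (hx1 : v x < 1) :
      C * v x ^ Multiset.card (p.roots.filter (v · < 1)) = D * v x := by
    rw [← hpow x (hx₁.1.2.trans_le hx) hx1, hlin x (hx₁.1.1.trans_le hx) hx1]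
  exact eq_one_of_mul_pow_eq_mul hD hx₁.2 hx₂ (eq_at le_rfl hx₁1) (eq_at hx₂.le hx₂1)

lemma eq_of_tendsto_abv_sub_sum_at_zero {cs : ℕ → K} {y : K}
    (h : Tendsto (fun N => v (y - ∑ i ∈ Finset.range N, cs i * 0 ^ i)) atTop (𝓝 0)) :
    y = cs 0 := by
  have hconst :
      ∀ᶠ N in atTop, v (y - ∑ i ∈ Finset.range N, cs i * 0 ^ i) = v (y - cs 0) := by
    filter_upwards [eventually_ge_atTop 1] with N hN
    rw [Finset.sum_eq_single_of_mem 0 (Finset.mem_range.mpr hN) fun i _ hi => by simp [hi]]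
    simp
  have hlim : Tendsto (fun _ : ℕ => v (y - cs 0)) atTop (𝓝 0) := h.congr' hconst
  exact sub_eq_zero.mp <| v.eq_zero.mp (tendsto_nhds_unique tendsto_const_nhds hlim)

lemma abv_sum_sub_self_eq (hv : IsNonarchimedean v) {cs : ℕ → K} {x : K}
    (h₀ : v (cs 0) < v x) (hx : v x < 1) (h₁ : v (cs 1) < 1)
    (hge2 : ∀ n, 2 ≤ n → v (cs n) ≤ 1)
    {N : ℕ} (hN : 2 ≤ N) : v (∑ i ∈ Finset.range N, cs i * x ^ i - x) = v x := by
  have hxpos : 0 < v x := (v.nonneg _).trans_lt h₀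
  have hrest : v (∑ i ∈ (Finset.range N).erase 1, cs i * x ^ i) < v x := by
    obtain ⟨i, hi, hle⟩ := hv.finset_image_add_of_nonempty (fun i => cs i * x ^ i)
      (t := (Finset.range N).erase 1) ⟨0, by simp; omega⟩
    refine hle.trans_lt ?_
    obtain ⟨hi1, -⟩ := Finset.mem_erase.mp hi
    rcases Nat.lt_or_ge i 2 with hi2 | hi2
    · obtain rfl : i = 0 := by omega
      simpa using h₀
    · calc v (cs i * x ^ i) = v (cs i) * v x ^ i := by rw [map_mul, map_pow]
        _ ≤ v x ^ i := mul_le_of_le_one_left (by positivity) (hge2 i hi2)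
        _ ≤ v x ^ 2 := pow_le_pow_of_le_one (v.nonneg x) hx.le hi2
        _ < v x := by rw [sq]; exact mul_lt_of_lt_one_left hxpos hx
  have hunit : v (cs 1 - 1) = 1 := by
    rw [abv_sub_eq_right_of_lt hv (by simpa using h₁), v.map_one]
  have hsplit : ∑ i ∈ Finset.range N, cs i * x ^ i - x =
      (cs 1 - 1) * x + ∑ i ∈ (Finset.range N).erase 1, cs i * x ^ i := by
    rw [← Finset.add_sum_erase _ _ (Finset.mem_range.mpr (by omega : 1 < N))]
    ring
  rw [hsplit, hv.add_eq_left_of_lt (by rwa [map_mul, hunit, one_mul]), map_mul, hunit, one_mul]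

lemma abv_sub_self_eq_of_tendsto (hv : IsNonarchimedean v) {cs : ℕ → K} {x y : K}
    (h₀ : v (cs 0) < v x) (hx : v x < 1) (h₁ : v (cs 1) < 1)
    (hge2 : ∀ n, 2 ≤ n → v (cs n) ≤ 1)
    (hy : Tendsto (fun N => v (y - ∑ i ∈ Finset.range N, cs i * x ^ i)) atTop (𝓝 0)) :
    v (y - x) = v x := by
  obtain ⟨N, hN, hN2⟩ :=
    ((hy.eventually_lt_const ((v.nonneg _).trans_lt h₀)).and (eventually_ge_atTop 2)).exists
  have hsum := abv_sum_sub_self_eq hv h₀ hx h₁ hge2 hN2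
  rw [← sub_add_sub_cancel y (∑ i ∈ Finset.range N, cs i * x ^ i) x,
    hv.add_eq_right_of_lt (hsum.symm ▸ hN), hsum]

end NonarchimedeanDisk

/-- A rational function on the open unit disk with Weierstrass data as in the hypothesis
(`|cₙ| < 1` for `n < ℓ`, `|c_ℓ| = 1`, `|cₙ| ≤ 1` for `n > ℓ`, with `ℓ ≥ 2`) has exactly
one fixed point in the open unit disk. -/
theorem unique_attracting_fixed_point {Ω : Type} [Field Ω] [IsAlgClosed Ω]
    (v : AbsoluteValue Ω ℝ) (hv : IsNonarchimedean v)
    (φ : RatFunc Ω)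
    (hnopole : ∀ x : Ω, v x < 1 → φ.denom.eval x ≠ 0)
    (cs : ℕ → Ω)
    (hcs : ∀ x : Ω, v x < 1 →
      Filter.Tendsto (fun N => v (φ.num.eval x / φ.denom.eval x -
        ∑ i ∈ Finset.range N, cs i * x ^ i)) Filter.atTop (nhds 0))
    (ℓ : ℕ) (hl : 2 ≤ ℓ)
    (hlt : ∀ n : ℕ, n < ℓ → v (cs n) < 1)
    (heq : v (cs ℓ) = 1)
    (hle : ∀ n : ℕ, ℓ < n → v (cs n) ≤ 1) :
    ∃! x : Ω, v x < 1 ∧ φ.num.eval x / φ.denom.eval x = x := by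
  have h₀ : v (cs 0) < 1 := hlt 0 (by omega)
  by_cases hnt : v.IsNontrivial
  · have hge2 (n : ℕ) (hn : 2 ≤ n) : v (cs n) ≤ 1 := by
      rcases lt_trichotomy n ℓ with h | rfl | h
      exacts [(hlt n h).le, heq.le, hle n h]
    have hpoles : ∀ ρ ∈ φ.denom.roots, 1 ≤ v ρ := fun ρ hρ =>
      not_lt.mp fun h => hnopole ρ h (mem_roots'.mp hρ).2
    have hlin (x : Ω) (hcx : v (cs 0) < v x) (hx : v x < 1) :
        v ((φ.num - X * φ.denom).eval x) = v (φ.denom.eval 0) * v x := by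
      rw [eval_sub_X_mul_eq (hnopole x hx), map_mul, abv_eval_eq_abv_eval_zero hv hpoles hx,
        abv_sub_self_eq_of_tendsto hv hcx hx (hlt 1 (by omega)) hge2 (hcs x hx), mul_comm]
    have hroot := existsUnique_isRoot_of_card_filter_roots_eq_one <|
      card_roots_filter_abv_lt_one_eq_one hv hnt h₀ (v.ne_zero (hnopole 0 (by simp))) hlin
    refine (existsUnique_congr fun x => and_congr_right fun hx => ?_).mpr hroot
    rw [IsRoot.def, eval_sub_X_mul_eq (hnopole x hx), mul_eq_zero, sub_eq_zero,
      or_iff_left (hnopole x hx)]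
  · have hdisk (x : Ω) (hx : v x < 1) : x = 0 := by
      by_contra h
      exact hx.ne (v.not_isNontrivial_apply hnt h)
    refine ⟨0, ⟨by simp, ?_⟩, fun y hy => hdisk y hy.1⟩
    rw [eq_of_tendsto_abv_sub_sum_at_zero (hcs 0 (by simp)), hdisk _ h₀]

end PGR
end
end

section
/- Let K be a field with non-archimedean absolute value and let α ∈ K̄ be nonzero. Then there is a smallest positive integer n such that |α|^n ∈ |K^×|; choose b ∈ K with |b| = |α|^n and β ∈ K̄ with β^n = b. Then |β| = |α|, [K(β):K] = n, and the extension K(β)/K is totally ramified. -/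
open Polynomial

noncomputable section

namespace PGR

open scoped Classical

variable {Ω : Type} [Field Ω]

/-! Suppose no `|γ|^i` with `0 < i < n` lies in `|K^×|`. Then the nonzero terms of a sum
`∑_{i<n} cᵢ γ^i` with `cᵢ ∈ K` have pairwise distinct absolute values (a coincidence
`|cᵢ||γ|^i = |cⱼ||γ|^j` would put `|γ|^(j-i) = |cᵢ/cⱼ|` in `|K^×|`), so by the ultrametric
inequality the sum has the absolute value of its largest term and is nonzero. For the minimal
polynomial of `α` this forces some `|α|^n ∈ |K^×|`. For `β` it shows that the minimal polynomial
of `β`, a factor of `X^n - b`, has degree `n`, and that every nonzero element of `K(β)` has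
absolute value `|c||β|^i` with `c ∈ K^×`: so `|K(β)^×|` is generated by `|K^×|` and `|β|`, and
the class of `|β|` has order exactly `n` modulo `|K^×|`. -/

theorem relIndex_eq_orderOf_mk {G : Type*} [CommGroup G] {H L : Subgroup G} {a : G}
    (ha : a ∈ L) (hL : L ≤ H ⊔ Subgroup.zpowers a) :
    H.relIndex L = orderOf (a : G ⧸ H) := by
  have hmap : L.map (QuotientGroup.mk' H) = Subgroup.zpowers (a : G ⧸ H) := by
    refine le_antisymm ?_ (Subgroup.zpowers_le.mpr (Subgroup.mem_map_of_mem _ ha))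
    calc L.map (QuotientGroup.mk' H)
        ≤ (H ⊔ Subgroup.zpowers a).map (QuotientGroup.mk' H) := Subgroup.map_mono hL
      _ = Subgroup.zpowers (a : G ⧸ H) := by
        rw [Subgroup.map_sup, QuotientGroup.map_mk'_self, bot_sup_eq, MonoidHom.map_zpowers]
        rfl
  have hker := Subgroup.relIndex_ker L (QuotientGroup.mk' H)
  rwa [QuotientGroup.ker_mk', hmap, Nat.card_zpowers] at hker

section ValueGroup

variable {K : Type} [Field K] [Algebra K Ω] (v : AbsoluteValue Ω ℝ)

theorem mem_valueGroup_fieldRange_iff {r : ℝˣ} :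
    r ∈ valueGroup v (algebraMap K Ω).fieldRange ↔ (r : ℝ) ∈ absSetNZ v K := by
  constructor
  · rintro ⟨_, hx0, ⟨c, rfl⟩, hc⟩
    exact ⟨c, by rintro rfl; simp at hx0, hc⟩
  · rintro ⟨c, hc0, hc⟩
    exact ⟨algebraMap K Ω c, by simpa using hc0, ⟨c, rfl⟩, hc⟩

theorem pow_sub_mem_absSetNZ {c d : K} (hc : c ≠ 0) (hd : d ≠ 0) {r : ℝ} (hr : r ≠ 0)
    {i j : ℕ} (hij : i ≤ j)
    (h : v (algebraMap K Ω c) * r ^ i = v (algebraMap K Ω d) * r ^ j) :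
    r ^ (j - i) ∈ absSetNZ v K := by
  have hvd : v (algebraMap K Ω d) ≠ 0 := by simpa using hd
  refine ⟨c / d, div_ne_zero hc hd, ?_⟩
  rw [map_div₀, map_div₀, div_eq_iff hvd]
  apply mul_right_cancel₀ (pow_ne_zero i hr)
  rw [h, mul_assoc, mul_left_comm, pow_sub_mul_pow r hij]

variable {v}

theorem exists_coeff_ne_zero_apply_aeval_eq (hv : IsNonarchimedean v) {γ : Ω} (hγ : γ ≠ 0)
    {n : ℕ} (hn : ∀ i, 0 < i → i < n → v γ ^ i ∉ absSetNZ v K) {f : K[X]} (hf : f ≠ 0)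
    (hfn : f.natDegree < n) :
    ∃ i, f.coeff i ≠ 0 ∧ v (aeval γ f) = v (algebraMap K Ω (f.coeff i)) * v γ ^ i := by
  set t : ℕ → ℝ := fun i => v (algebraMap K Ω (f.coeff i)) * v γ ^ i with ht_def
  have ht : ∀ i, v (f.coeff i • γ ^ i) = t i := fun i => by
    rw [Algebra.smul_def, v.map_mul, v.map_pow]
  have ht_pos : ∀ i, f.coeff i ≠ 0 → 0 < t i := fun i hi =>
    mul_pos (v.pos (by simpa using hi)) (pow_pos (v.pos hγ) i)
  obtain ⟨k, hk, hmax⟩ :=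
    (Finset.range (f.natDegree + 1)).exists_max_image t Finset.nonempty_range_add_one
  have hkn : k < n := by have := Finset.mem_range.mp hk; omega
  have hck : f.coeff k ≠ 0 := by
    intro hk0
    have := hmax _ (Finset.self_mem_range_succ _)
    simp only [ht_def, hk0, map_zero, zero_mul] at this
    exact this.not_gt (ht_pos _ (leadingCoeff_ne_zero.mpr hf))
  refine ⟨k, hck, ?_⟩
  rw [aeval_eq_sum_range]
  change _ = t k
  rw [← ht]
  refine hv.apply_sum_eq_of_lt (fun x => (v.map_neg x).symm) hk fun j hj hjk => ?_
  rw [ht, ht]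
  refine (hmax j hj).lt_of_ne fun htj => ?_
  have hjn : j < n := by have := Finset.mem_range.mp hj; omega
  have hcj : f.coeff j ≠ 0 := by
    intro hj0
    simp only [ht_def, hj0, map_zero, zero_mul] at htj
    exact (ht_pos k hck).ne htj
  have hvγ : v γ ≠ 0 := (v.pos hγ).ne'
  rcases hjk.lt_or_gt with hlt | hlt
  · exact hn (k - j) (by omega) (by omega) (pow_sub_mem_absSetNZ v hcj hck hvγ hlt.le htj)
  · exact hn (j - k) (by omega) (by omega) (pow_sub_mem_absSetNZ v hck hcj hvγ hlt.le htj.symm)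

theorem aeval_ne_zero_of_natDegree_lt (hv : IsNonarchimedean v) {γ : Ω} (hγ : γ ≠ 0)
    {n : ℕ} (hn : ∀ i, 0 < i → i < n → v γ ^ i ∉ absSetNZ v K) {f : K[X]} (hf : f ≠ 0)
    (hfn : f.natDegree < n) : aeval γ f ≠ 0 := by
  obtain ⟨i, hi, hvf⟩ := exists_coeff_ne_zero_apply_aeval_eq hv hγ hn hf hfn
  rw [← v.pos_iff, hvf]
  exact mul_pos (v.pos (by simpa using hi)) (pow_pos (v.pos hγ) i)

theorem exists_pos_pow_mem_absSetNZ (hv : IsNonarchimedean v) {α : Ω} (hα : IsAlgebraic K α)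
    (hα0 : α ≠ 0) : ∃ n, 0 < n ∧ v α ^ n ∈ absSetNZ v K := by
  by_contra! h
  exact aeval_ne_zero_of_natDegree_lt hv hα0 (n := (minpoly K α).natDegree + 1)
    (fun i hi _ => h i hi) (minpoly.ne_zero hα.isIntegral) (lt_add_one _) (minpoly.aeval K α)

theorem finrank_adjoin_eq_of_pow_eq (hv : IsNonarchimedean v) {β : Ω} (hβ0 : β ≠ 0)
    {n : ℕ} (hn : 0 < n) {b : K} (hβ : β ^ n = algebraMap K Ω b)
    (hmin : ∀ i, 0 < i → i < n → v β ^ i ∉ absSetNZ v K) :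
    Module.finrank K (IntermediateField.adjoin K ({β} : Set Ω)) = n := by
  have hint : IsIntegral K β := IsIntegral.of_pow hn (hβ ▸ isIntegral_algebraMap)
  rw [IntermediateField.adjoin.finrank hint]
  refine le_antisymm ?_ (not_lt.mp fun hlt =>
    aeval_ne_zero_of_natDegree_lt hv hβ0 hmin (minpoly.ne_zero hint) hlt (minpoly.aeval K β))
  have hroot : aeval β (X ^ n - C b) = 0 := by simp [hβ]
  simpa [natDegree_X_pow_sub_C] using
    natDegree_le_natDegree (minpoly.min K β (monic_X_pow_sub_C b hn.ne') hroot)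

theorem exists_apply_eq_mul_pow_of_mem_adjoin (hv : IsNonarchimedean v) {β : Ω} (hβ0 : β ≠ 0)
    (hint : IsIntegral K β)
    (hmin : ∀ i, 0 < i → i < (minpoly K β).natDegree → v β ^ i ∉ absSetNZ v K)
    {x : Ω} (hx : x ∈ IntermediateField.adjoin K ({β} : Set Ω)) (hx0 : x ≠ 0) :
    ∃ c : K, c ≠ 0 ∧ ∃ i, v x = v (algebraMap K Ω c) * v β ^ i := by
  obtain ⟨f, hfdeg, hfx⟩ := (IntermediateField.adjoin.powerBasis hint).exists_eq_aeval ⟨x, hx⟩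
  have hxf : x = aeval β f := by
    simpa [IntermediateField.aeval_coe] using congrArg Subtype.val hfx
  subst hxf
  have hf : f ≠ 0 := by rintro rfl; simp at hx0
  obtain ⟨i, hi, hvx⟩ := exists_coeff_ne_zero_apply_aeval_eq hv hβ0 hmin hf hfdeg
  exact ⟨f.coeff i, hi, i, hvx⟩

theorem adjoinTotallyRamified_of_pow_eq (hv : IsNonarchimedean v) {β : Ω} (hβ0 : β ≠ 0)
    {n : ℕ} (hn : 0 < n) {b : K} (hβ : β ^ n = algebraMap K Ω b)
    (hmin : ∀ i, 0 < i → i < n → v β ^ i ∉ absSetNZ v K) :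
    AdjoinTotallyRamified v K β := by
  have hint : IsIntegral K β := IsIntegral.of_pow hn (hβ ▸ isIntegral_algebraMap)
  have hfinrank := finrank_adjoin_eq_of_pow_eq hv hβ0 hn hβ hmin
  have hdeg : (minpoly K β).natDegree = n := IntermediateField.adjoin.finrank hint ▸ hfinrank
  set H := valueGroup v (algebraMap K Ω).fieldRange
  set a : ℝˣ := Units.mk0 (v β) (v.ne_zero_iff.mpr hβ0)
  have ha : a ∈ valueGroup v (IntermediateField.adjoin K ({β} : Set Ω)).toSubfield :=
    ⟨β, hβ0, IntermediateField.mem_adjoin_simple_self K β, rfl⟩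
  have hle : valueGroup v (IntermediateField.adjoin K ({β} : Set Ω)).toSubfield ≤
      H ⊔ Subgroup.zpowers a := by
    rintro r ⟨x, hx0, hx, hxr⟩
    obtain ⟨c, hc0, i, hvx⟩ :=
      exists_apply_eq_mul_pow_of_mem_adjoin hv hβ0 hint (hdeg ▸ hmin) hx hx0
    refine Subgroup.mem_sup.mpr
      ⟨r * (a ^ i)⁻¹, ?_, a ^ i, Subgroup.npow_mem_zpowers a i, inv_mul_cancel_right r _⟩
    rw [mem_valueGroup_fieldRange_iff]
    refine ⟨c, hc0, ?_⟩
    rw [Units.val_mul, Units.val_inv_eq_inv_val, Units.val_pow_eq_pow_val, ← hxr, hvx]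
    field_simp
    rfl
  have hpow : ∀ i : ℕ, (a : ℝˣ ⧸ H) ^ i = 1 ↔ v β ^ i ∈ absSetNZ v K := fun i => by
    rw [← QuotientGroup.mk_pow, QuotientGroup.eq_one_iff, mem_valueGroup_fieldRange_iff]
    rfl
  have hb0 : b ≠ 0 := by
    rintro rfl
    exact hβ0 (pow_eq_zero_iff hn.ne' |>.mp (by simpa using hβ))
  unfold AdjoinTotallyRamified
  rw [hfinrank, relIndex_eq_orderOf_mk ha hle, eq_comm, orderOf_eq_iff hn, hpow]
  exact ⟨⟨b, hb0, by rw [← hβ, v.map_pow]⟩, fun i hin hi0 => (hpow i).not.mpr (hmin i hi0 hin)⟩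

end ValueGroup

theorem totally_ramified_same_absolute_value_general {K Ω : Type} [Field K] [Field Ω]
    [Algebra K Ω]
    (v : AbsoluteValue Ω ℝ) (hv : IsNonarchimedean v)
    (α : Ω) (hα : IsAlgebraic K α) (hα0 : α ≠ 0) :
    (∃ n : ℕ, 0 < n ∧ (v α) ^ n ∈ absSetNZ v K ∧
      ∀ i : ℕ, 0 < i → i < n → (v α) ^ i ∉ absSetNZ v K) ∧
    (∀ n : ℕ, 0 < n → (v α) ^ n ∈ absSetNZ v K →
      (∀ i : ℕ, 0 < i → i < n → (v α) ^ i ∉ absSetNZ v K) →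
      ∀ b : K, v (algebraMap K Ω b) = (v α) ^ n →
      ∀ β : Ω, β ^ n = algebraMap K Ω b →
        v β = v α ∧
        Module.finrank K (IntermediateField.adjoin K ({β} : Set Ω)) = n ∧
        AdjoinTotallyRamified v K β) := by
  have hex := exists_pos_pow_mem_absSetNZ hv hα hα0
  refine ⟨⟨Nat.find hex, (Nat.find_spec hex).1, (Nat.find_spec hex).2,
    fun i hi hin hmem => Nat.find_min hex hin ⟨hi, hmem⟩⟩, ?_⟩
  intro n hn _ hmin b hb β hβ
  have hvβ : v β = v α :=
    (pow_left_inj₀ (v.nonneg β) (v.nonneg α) hn.ne').mp (by rw [← map_pow, hβ, hb])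
  have hβ0 : β ≠ 0 := v.pos_iff.mp (hvβ ▸ v.pos hα0)
  rw [← hvβ] at hmin
  exact ⟨hvβ, finrank_adjoin_eq_of_pow_eq hv hβ0 hn hβ hmin,
    adjoinTotallyRamified_of_pow_eq hv hβ0 hn hβ hmin⟩

/-- For nonzero `α ∈ K̄` there is a smallest `n ≥ 1` with `|α|^n ∈ |K^×|`; and for any
`b ∈ K` with `|b| = |α|^n` and any `n`-th root `β` of `b`, one has `|β| = |α|`,
`[K(β):K] = n`, and `K(β)/K` is totally ramified. -/
theorem totally_ramified_same_absolute_value {K Ω : Type} [Field K] [Field Ω]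
    [Algebra K Ω] [IsAlgClosed Ω]
    (v : AbsoluteValue Ω ℝ) (hv : IsNonarchimedean v)
    (α : Ω) (hα : IsAlgebraic K α) (hα0 : α ≠ 0) :
    (∃ n : ℕ, 0 < n ∧ (v α) ^ n ∈ absSetNZ v K ∧
      ∀ i : ℕ, 0 < i → i < n → (v α) ^ i ∉ absSetNZ v K) ∧
    (∀ n : ℕ, 0 < n → (v α) ^ n ∈ absSetNZ v K →
      (∀ i : ℕ, 0 < i → i < n → (v α) ^ i ∉ absSetNZ v K) →
      ∀ b : K, v (algebraMap K Ω b) = (v α) ^ n →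
      ∀ β : Ω, β ^ n = algebraMap K Ω b →
        v β = v α ∧
        Module.finrank K (IntermediateField.adjoin K ({β} : Set Ω)) = n ∧
        AdjoinTotallyRamified v K β) :=
  totally_ramified_same_absolute_value_general v hv α hα hα0

end PGR
end
end
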